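/- arXiv:2404.16786 — 4 statements merged into one kernel-verified Lean document; each statement's English description precedes it below -/
import Mathlib

section
/- For all integers n ≥ 0 and 0 ≤ k ≤ n+1, one has k · S(n+1, k) = Σ_{ℓ=k-1}^{n} (-1)^{n-ℓ} · C(n+1, ℓ) · S(ℓ+1, k), where S(·,·) denotes the Stirling numbers of the second kind and C(·,·) the binomial coefficient. -/
/-- Stirling numbers of the second kind. -/
def stirling : ℕ → ℕ → ℕ
  | 0, 0 => 1
  | 0, _ + 1 => 0
  | _ + 1, 0 => 0
  | n + 1, k + 1 => (k + 1) * stirling n (k + 1) + stirling n k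

/-!
With `f ℓ = S(ℓ+1, k)`, the alternating sum is `f (n+1) - Δ^(n+1) f 0`: it is the Newton
expansion of the `(n+1)`-st forward difference with its top term removed. The recurrence gives
`Δ S(·+1, k+1) = k • S(·+1, k+1) + S(·+1, k)`, so by induction `Δ^m S(·+1, k+1) 0 = S(m, k)`,
and the sum equals `S(n+2, k) - S(n+1, k-1) = k S(n+1, k)`.
-/

open Finset Nat fwdDiff

theorem stirling_eq_stirlingSecond : stirling = stirlingSecond := by
  funext n k
  induction n generalizing k with
  | zero => cases k <;> rfl
  | succ n ih => cases k <;> simp [stirling, stirlingSecond_succ_succ, ih]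

theorem sum_range_alternating_choose_eq_sub_fwdDiff_iter {R : Type*} [Ring R] (f : ℕ → R)
    (n : ℕ) :
    ∑ ℓ ∈ range (n + 1), (-1) ^ (n - ℓ) * ((n + 1).choose ℓ : R) * f ℓ =
      f (n + 1) - (Δ_[1])^[n + 1] f 0 := by
  rw [fwdDiff_iter_eq_sum_shift, sum_range_succ _ (n + 1)]
  simp only [zero_add, zsmul_eq_mul, smul_eq_mul, mul_one, Nat.sub_self, pow_zero,
    choose_self, Int.cast_mul, Int.cast_pow, Int.cast_neg, Int.cast_one, Int.cast_natCast,
    Nat.cast_one, one_mul]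
  rw [sub_add_cancel_right, ← sum_neg_distrib]
  refine sum_congr rfl fun ℓ hℓ => ?_
  rw [Nat.sub_add_comm (mem_range_succ_iff.mp hℓ), pow_succ]
  noncomm_ring

theorem fwdDiff_iter_stirlingSecond_succ (m k : ℕ) :
    (Δ_[1])^[m] (fun ℓ ↦ (stirlingSecond (ℓ + 1) (k + 1) : ℤ)) 0 = stirlingSecond m k := by
  induction m generalizing k with
  | zero => cases k <;> simp [stirlingSecond]
  | succ m ih =>
    have hstep : Δ_[1] (fun ℓ ↦ (stirlingSecond (ℓ + 1) (k + 1) : ℤ)) =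
        (k : ℤ) • (fun ℓ ↦ (stirlingSecond (ℓ + 1) (k + 1) : ℤ)) +
          fun ℓ ↦ (stirlingSecond (ℓ + 1) k : ℤ) := by
      funext ℓ
      simp only [fwdDiff, stirlingSecond_succ_succ (ℓ + 1), Pi.add_apply, Pi.smul_apply,
        smul_eq_mul]
      push_cast
      ring
    rw [Function.iterate_succ_apply, hstep, fwdDiff_iter_add, fwdDiff_iter_const_smul,
      Pi.add_apply, Pi.smul_apply, ih, smul_eq_mul]
    cases k with
    | zero => simp [Function.iterate_fixed (fwdDiff_const (1 : ℕ) (0 : ℤ))]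
    | succ j => rw [ih, stirlingSecond_succ_succ]; push_cast; ring

theorem stirling_alternating_identity_general (n k : ℕ) :
    (k : ℤ) * stirling (n + 1) k =
      ∑ ℓ ∈ Finset.Icc (k - 1) n,
        (-1 : ℤ) ^ (n - ℓ) * ((n + 1).choose ℓ : ℤ) * (stirling (ℓ + 1) k : ℤ) := by
  rw [stirling_eq_stirlingSecond]
  have hvanish : ∀ ℓ ∈ range (n + 1), ℓ ∉ Icc (k - 1) n →
      (-1 : ℤ) ^ (n - ℓ) * ((n + 1).choose ℓ : ℤ) * (stirlingSecond (ℓ + 1) k : ℤ) = 0 := by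
    intro ℓ hℓ hℓk
    rw [stirlingSecond_eq_zero_of_lt (by simp at hℓ hℓk; omega), Nat.cast_zero, mul_zero]
  rw [sum_subset (fun ℓ hℓ => by simp at hℓ ⊢; omega) hvanish,
    sum_range_alternating_choose_eq_sub_fwdDiff_iter]
  cases k with
  | zero => simp [Function.iterate_fixed (fwdDiff_const (1 : ℕ) (0 : ℤ))]
  | succ j =>
    rw [fwdDiff_iter_stirlingSecond_succ, stirlingSecond_succ_succ (n + 1)]
    push_cast
    ring

theorem stirling_alternating_identity (n k : ℕ) (hk : k ≤ n + 1) :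
    (k : ℤ) * stirling (n + 1) k =
      ∑ ℓ ∈ Finset.Icc (k - 1) n,
        (-1 : ℤ) ^ (n - ℓ) * ((n + 1).choose ℓ : ℤ) * (stirling (ℓ + 1) k : ℤ) :=
  stirling_alternating_identity_general n k
end

section
/- Define F(n,m) for n,m ≥ 0 by the recursion F(0,m) = 1 for all m, and F(n,m) = Σ_{ℓ=0}^{m} C(m+1,ℓ) · F(n-1,ℓ) for n ≥ 1. Then F(n,m) = Σ_{k=1}^{n+1} (-1)^{n-k+1} · k! · k^m · S(n+1,k), where S denotes the Stirling numbers of the second kind. -/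
/-- The number of `n × m` Drinfeld–Yetter mosaics, via its recursion. -/
def mosaicCount : ℕ → ℕ → ℕ
  | 0, _ => 1
  | n + 1, m => ∑ ℓ ∈ Finset.range (m + 1), (m + 1).choose ℓ * mosaicCount n ℓ

/-!
Write `c n k = (-1)^(n+1+k) k! S(n+1,k)`, so that the claim is `F(n,m) = ∑ₖ c n k kᵐ`.
The recursion of `F` sends the exponential `m ↦ kᵐ` to
`m ↦ ∑_{ℓ ≤ m} C(m+1,ℓ) kˡ = (k+1)^(m+1) - k^(m+1)`, while the Stirling recursion gives
`c (n+1) (k+1) = (k+1) (c n k - c n (k+1))`; after a shift of the summation index these agree,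
and induction on `n` does the rest.
-/

open Finset

lemma stirling_eq_zero_of_lt : ∀ {n k : ℕ}, n < k → stirling n k = 0
  | 0, _ + 1, _ => rfl
  | n + 1, k + 1, h => by
    rw [stirling, stirling_eq_zero_of_lt (by omega : n < k + 1),
      stirling_eq_zero_of_lt (by omega : n < k), mul_zero]

lemma sum_range_choose_mul_pow {R : Type*} [CommRing R] (m : ℕ) (x : R) :
    ∑ ℓ ∈ range (m + 1), ((m + 1).choose ℓ : R) * x ^ ℓ = (x + 1) ^ (m + 1) - x ^ (m + 1) := by
  rw [add_pow, sum_range_succ _ (m + 1), Nat.choose_self]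
  simp only [one_pow, mul_one, Nat.cast_one, add_sub_cancel_right]
  exact sum_congr rfl fun _ _ => mul_comm _ _

lemma neg_one_pow_sub_eq_pow_add {R : Type*} [Monoid R] [HasDistribNeg R] {k n : ℕ} (h : k ≤ n) :
    (-1 : R) ^ (n - k) = (-1) ^ (n + k) := by
  obtain ⟨d, rfl⟩ := Nat.exists_eq_add_of_le h
  rw [Nat.add_sub_cancel_left, show k + d + k = d + 2 * k by ring, pow_add, pow_mul]
  simp

-- The sign uses `n + 1 + k` rather than `n + 1 - k` to avoid truncated subtraction.
def mosaicCoeff (n k : ℕ) : ℤ :=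
  (-1) ^ (n + 1 + k) * k.factorial * stirling (n + 1) k

lemma mosaicCoeff_zero_right (n : ℕ) : mosaicCoeff n 0 = 0 := by
  simp [mosaicCoeff, stirling]

lemma mosaicCoeff_eq_zero_of_lt {n k : ℕ} (h : n + 1 < k) : mosaicCoeff n k = 0 := by
  simp [mosaicCoeff, stirling_eq_zero_of_lt h]

lemma mosaicCoeff_succ_succ (n k : ℕ) :
    mosaicCoeff (n + 1) (k + 1) = (k + 1) * (mosaicCoeff n k - mosaicCoeff n (k + 1)) := by
  simp only [mosaicCoeff, stirling, Nat.factorial_succ]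
  push_cast
  ring

lemma sum_range_choose_mul_sum_pow {R : Type*} [CommRing R] (s : Finset ℕ) (a : ℕ → R) (m : ℕ) :
    ∑ ℓ ∈ range (m + 1), ((m + 1).choose ℓ : R) * ∑ k ∈ s, a k * (k : R) ^ ℓ =
      ∑ k ∈ s, a k * (((k : R) + 1) ^ (m + 1) - (k : R) ^ (m + 1)) := by
  simp_rw [mul_sum, ← sum_range_choose_mul_pow, mul_sum]
  rw [sum_comm]
  refine sum_congr rfl fun k _ => sum_congr rfl fun ℓ _ => ?_
  ring

lemma sum_range_mosaicCoeff_succ_mul_pow (n m : ℕ) :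
    ∑ k ∈ range (n + 2), mosaicCoeff n (k + 1) * ((k : ℤ) + 1) ^ m =
      ∑ k ∈ range (n + 2), mosaicCoeff n k * (k : ℤ) ^ m := by
  rw [sum_range_succ, mosaicCoeff_eq_zero_of_lt (by omega : n + 1 < n + 1 + 1), zero_mul,
    add_zero, sum_range_succ' (fun k => mosaicCoeff n k * (k : ℤ) ^ m),
    mosaicCoeff_zero_right, zero_mul, add_zero]
  push_cast
  rfl

lemma mosaicCount_eq_sum_range (n m : ℕ) :
    (mosaicCount n m : ℤ) = ∑ k ∈ range (n + 2), mosaicCoeff n k * (k : ℤ) ^ m := by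
  induction n generalizing m with
  | zero => simp [mosaicCount, sum_range_succ, mosaicCoeff, stirling]
  | succ n ih =>
    calc (mosaicCount (n + 1) m : ℤ)
        = ∑ k ∈ range (n + 2), mosaicCoeff n k * (((k : ℤ) + 1) ^ (m + 1) - (k : ℤ) ^ (m + 1)) := by
          simp only [mosaicCount, Nat.cast_sum, Nat.cast_mul, ih, sum_range_choose_mul_sum_pow]
      _ = ∑ k ∈ range (n + 2), mosaicCoeff (n + 1) (k + 1) * ((k : ℤ) + 1) ^ m := by
          simp only [mul_sub, sum_sub_distrib]
          rw [← sum_range_mosaicCoeff_succ_mul_pow n (m + 1), ← sum_sub_distrib]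
          refine sum_congr rfl fun k _ => ?_
          rw [mosaicCoeff_succ_succ]
          ring
      _ = ∑ k ∈ range (n + 3), mosaicCoeff (n + 1) k * (k : ℤ) ^ m := by
          rw [sum_range_succ' _ (n + 2), mosaicCoeff_zero_right, zero_mul, add_zero]
          push_cast
          rfl

theorem mosaicCount_eq_stirling_sum (n m : ℕ) :
    (mosaicCount n m : ℤ) =
      ∑ k ∈ Finset.Icc 1 (n + 1),
        (-1 : ℤ) ^ (n + 1 - k) * (k.factorial : ℤ) * (k : ℤ) ^ m * (stirling (n + 1) k : ℤ) := by
  rw [mosaicCount_eq_sum_range, range_eq_Ico, sum_eq_sum_Ico_succ_bot (by omega),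
    mosaicCoeff_zero_right, zero_mul, zero_add, ← Ico_add_one_right_eq_Icc]
  refine sum_congr rfl fun k hk => ?_
  rw [mosaicCoeff, ← neg_one_pow_sub_eq_pow_add (by simpa using (mem_Ico.mp hk).2 : k ≤ n + 1)]
  ring
end

section
/- Let F(n,m) be defined for n,m ≥ 0 by F(0,m) = 1 = F(n,0) and, for n,m ≥ 1, by F(n,m) = Σ_{ℓ=0}^{m} C(m+1,ℓ) · F(n-1,ℓ). Then F also satisfies the dual recursion F(n,m) = Σ_{k=0}^{n} C(n+1,k) · F(k,m-1) for all n ≥ 0 and m ≥ 1. -/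
/-!
The heart of the matter is the symmetry `F n m = F m n`, proved by induction on `n + m`: the dual
recursion is then just the defining recursion read on the transpose. For the inductive step, Pascal's
rule splits `F (a + 1) (b + 1)` into `F b (a + 1) + F (b + 1) a` plus a double sum
`∑ C(b+1, ℓ) C(a+1, k) F k ℓ`, where the dual recursion is used at levels already known to be
symmetric. Every term of this decomposition has level at most `a + b + 1`, so by induction it is
symmetric in `a` and `b`.
-/

open Finset

theorem sum_range_succ_choose_smul {M : Type*} [AddCommMonoid M] (f : ℕ → M) (n : ℕ) :
    ∑ i ∈ range (n + 1), (n + 1).choose i • f i =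
      ∑ i ∈ range (n + 1), n.choose i • f i + ∑ i ∈ range n, n.choose i • f (i + 1) := by
  rw [sum_range_succ', sum_range_succ' (fun i => n.choose i • f i)]
  simp only [Nat.choose_succ_succ, add_smul, sum_add_distrib, Nat.choose_zero_right]
  abel

def IsSymmUpTo (F : ℕ → ℕ → ℕ) (s : ℕ) : Prop :=
  ∀ a b, a + b ≤ s → F a b = F b a

def crossSum (F : ℕ → ℕ → ℕ) (a b : ℕ) : ℕ :=
  ∑ ℓ ∈ range (b + 1), (b + 1).choose ℓ * ∑ k ∈ range (a + 1), (a + 1).choose k * F k ℓ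

section Recursion

variable {F : ℕ → ℕ → ℕ} {s : ℕ}

theorem crossSum_comm (hs : IsSymmUpTo F s) {a b : ℕ} (hab : a + b ≤ s) :
    crossSum F a b = crossSum F b a := by
  simp only [crossSum, mul_sum]
  rw [sum_comm]
  refine sum_congr rfl fun k hk => sum_congr rfl fun ℓ hℓ => ?_
  rw [mem_range] at hk hℓ
  rw [hs k ℓ (by omega)]
  ring

theorem dual_rec_of_isSymmUpTo (h0 : ∀ m, F 0 m = 1)
    (hrec : ∀ n m, 1 ≤ n → 1 ≤ m →
      F n m = ∑ ℓ ∈ range (m + 1), (m + 1).choose ℓ * F (n - 1) ℓ)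
    (hs : IsSymmUpTo F s) {n m : ℕ} (h : n + m + 1 ≤ s) :
    F n (m + 1) = ∑ k ∈ range (n + 1), (n + 1).choose k * F k m := by
  rcases n with _ | n
  · simp [h0]
  · rw [hs _ _ (by omega), hrec _ _ (by omega) (by omega), Nat.add_sub_cancel]
    refine sum_congr rfl fun k hk => ?_
    rw [hs m k (by rw [mem_range] at hk; omega)]

theorem succ_succ_eq_of_isSymmUpTo (h0 : ∀ m, F 0 m = 1)
    (hrec : ∀ n m, 1 ≤ n → 1 ≤ m →
      F n m = ∑ ℓ ∈ range (m + 1), (m + 1).choose ℓ * F (n - 1) ℓ)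
    (hs : IsSymmUpTo F s) {a b : ℕ} (hab : a + b + 1 ≤ s) :
    F (a + 1) (b + 1) = F b (a + 1) + F (b + 1) a + crossSum F a b := by
  have hpascal := sum_range_succ_choose_smul (F a) (b + 1)
  simp only [smul_eq_mul] at hpascal
  have hdiag : ∑ ℓ ∈ range (b + 1 + 1), (b + 1).choose ℓ * F a ℓ = F b (a + 1) + F (b + 1) a := by
    rw [sum_range_succ, Nat.choose_self, one_mul, hs a (b + 1) (by omega),
      dual_rec_of_isSymmUpTo h0 hrec hs (by omega : b + a + 1 ≤ s)]
    congr 1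
    refine sum_congr rfl fun ℓ hℓ => ?_
    rw [hs a ℓ (by rw [mem_range] at hℓ; omega)]
  have hcross : ∑ ℓ ∈ range (b + 1), (b + 1).choose ℓ * F a (ℓ + 1) = crossSum F a b := by
    refine sum_congr rfl fun ℓ hℓ => ?_
    rw [dual_rec_of_isSymmUpTo h0 hrec hs (by rw [mem_range] at hℓ; omega)]
  rw [hrec _ _ (by omega) (by omega), Nat.add_sub_cancel, hpascal, hdiag, hcross]

theorem isSymmUpTo_of_rec (h0 : ∀ m, F 0 m = 1) (h0' : ∀ n, F n 0 = 1)
    (hrec : ∀ n m, 1 ≤ n → 1 ≤ m →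
      F n m = ∑ ℓ ∈ range (m + 1), (m + 1).choose ℓ * F (n - 1) ℓ) (s : ℕ) :
    IsSymmUpTo F s := by
  induction s with
  | zero =>
    intro a b hab
    obtain ⟨rfl, rfl⟩ : a = 0 ∧ b = 0 := by omega
    rfl
  | succ s hs =>
    intro a b hab
    rcases a with _ | a
    · rw [h0, h0']
    rcases b with _ | b
    · rw [h0, h0']
    rw [succ_succ_eq_of_isSymmUpTo h0 hrec hs (by omega),
      succ_succ_eq_of_isSymmUpTo h0 hrec hs (by omega), crossSum_comm hs (by omega),
      hs b (a + 1) (by omega), hs (b + 1) a (by omega), add_comm (F (a + 1) b)]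

end Recursion

theorem mosaic_dual_recursion (F : ℕ → ℕ → ℕ)
    (h0 : ∀ m, F 0 m = 1) (h0' : ∀ n, F n 0 = 1)
    (hrec : ∀ n m, 1 ≤ n → 1 ≤ m →
      F n m = ∑ ℓ ∈ Finset.range (m + 1), (m + 1).choose ℓ * F (n - 1) ℓ) :
    ∀ n m, 1 ≤ m → F n m = ∑ k ∈ Finset.range (n + 1), (n + 1).choose k * F k (m - 1) := by
  intro n m hm
  obtain ⟨m, rfl⟩ := Nat.exists_eq_add_of_le' hm
  exact dual_rec_of_isSymmUpTo h0 hrec (isSymmUpTo_of_rec h0 h0' hrec (n + m + 1)) le_rfl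
end

section
/- In the universal enveloping algebra U(sl₂(ℂ)), let X = ef + (1/4)h², Y = e²f² − efh + (1/2)efh² + (1/16)h⁴ + ef, and Z = e²f² − efh + (1/2)efh² + (1/16)h⁴. Then X² = 2Y − Z. -/
/-!
Write `E, F, H` for the images of `e, f, h`. The relations give `E F E F = E² F² - E F H + 2 E F`,
and `H` commutes with `E F`, so the two cross terms of `(E F + H²/4)²` combine to `E F H² / 2`.
Hence `X² = Z + 2 E F = 2 Y - Z`.
-/

theorem inv_four_add_inv_four {K : Type*} [Field K] :
    (4 : K)⁻¹ + (4 : K)⁻¹ = (2 : K)⁻¹ := by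
  rcases eq_or_ne (2 : K) 0 with h2 | h2
  · have h4 : (4 : K) = 0 := by linear_combination (2 : K) * h2
    simp [h2, h4]
  · have h4 : (4 : K) = 2 * 2 := by norm_num
    rw [h4, mul_inv, ← two_mul, ← mul_assoc, mul_inv_cancel₀ h2, one_mul]

section SlTwoTriple

variable {A : Type*} [Ring A] {E F H : A}

theorem sl2_mul_self_mul (hf : H * F = F * H - 2 * F) (hef : E * F = F * E + H) :
    E * F * (E * F) = E ^ 2 * F ^ 2 - E * F * H + 2 * (E * F) := by
  linear_combination (norm := noncomm_ring) -(E * hf) - E * hef * F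

theorem sl2_commute_mul (he : H * E = E * H + 2 * E) (hf : H * F = F * H - 2 * F) :
    Commute H (E * F) := by
  show H * (E * F) = E * F * H
  linear_combination (norm := noncomm_ring) E * hf + he * F

theorem sl2_sq_eq {K : Type*} [Field K] [Algebra K A]
    (he : H * E = E * H + 2 * E) (hf : H * F = F * H - 2 * F) (hef : E * F = F * E + H) :
    (E * F + (4 : K)⁻¹ • H ^ 2) ^ 2 =
      E ^ 2 * F ^ 2 - E * F * H + (2 : K)⁻¹ • (E * F * H ^ 2) + (16 : K)⁻¹ • H ^ 4
        + 2 * (E * F) := by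
  have hcomm : H ^ 2 * (E * F) = E * F * H ^ 2 := ((sl2_commute_mul he hf).pow_left 2).eq
  have h16 : (4 : K)⁻¹ * (4 : K)⁻¹ = (16 : K)⁻¹ := by rw [← mul_inv]; norm_num
  rw [sq (E * F + _), add_mul, mul_add, mul_add, sl2_mul_self_mul hf hef, smul_mul_assoc,
    mul_smul_comm, hcomm, smul_mul_smul, ← pow_add, h16, ← inv_four_add_inv_four, add_smul]
  abel

end SlTwoTriple

attribute [local instance 100] LieRing.ofAssociativeRing

theorem LieHom.map_mul_eq_of_lie {R L A : Type*} [CommRing R] [LieRing L] [LieAlgebra R L]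
    [Ring A] [Algebra R A] (φ : L →ₗ⁅R⁆ A) {x y z : L} (h : ⁅x, y⁆ = z) :
    φ x * φ y = φ y * φ x + φ z := by
  rw [← h, LieHom.map_lie, Ring.lie_def, add_sub_cancel]

theorem sl2_enriquez_counterexample (L : Type*) [LieRing L] [LieAlgebra ℂ L] (e f h : L)
    (hhe : ⁅h, e⁆ = (2 : ℂ) • e) (hhf : ⁅h, f⁆ = (-2 : ℂ) • f) (hef : ⁅e, f⁆ = h) :
    let E := UniversalEnvelopingAlgebra.ι ℂ e
    let F := UniversalEnvelopingAlgebra.ι ℂ f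
    let H := UniversalEnvelopingAlgebra.ι ℂ h
    let X := E * F + (4 : ℂ)⁻¹ • H ^ 2
    let Y := E ^ 2 * F ^ 2 - E * F * H + (2 : ℂ)⁻¹ • (E * F * H ^ 2) + (16 : ℂ)⁻¹ • H ^ 4
      + E * F
    let Z := E ^ 2 * F ^ 2 - E * F * H + (2 : ℂ)⁻¹ • (E * F * H ^ 2) + (16 : ℂ)⁻¹ • H ^ 4
    X ^ 2 = 2 * Y - Z := by
  intro E F H X Y Z
  have hHE : H * E = E * H + 2 * E := by
    have := (UniversalEnvelopingAlgebra.ι ℂ).map_mul_eq_of_lie hhe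
    rwa [map_smul, ofNat_smul_eq_nsmul, nsmul_eq_mul] at this
  have hHF : H * F = F * H - 2 * F := by
    have := (UniversalEnvelopingAlgebra.ι ℂ).map_mul_eq_of_lie hhf
    rwa [map_smul, neg_smul, ofNat_smul_eq_nsmul, nsmul_eq_mul, ← sub_eq_add_neg] at this
  have hEF : E * F = F * E + H := (UniversalEnvelopingAlgebra.ι ℂ).map_mul_eq_of_lie hef
  rw [sl2_sq_eq hHE hHF hEF]
  simp only [Y, Z, two_mul]
  abel
end
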